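/- arXiv:2407.16915 — 7 statements merged into one kernel-verified Lean document; each statement's English description precedes it below -/
import Mathlib

section
/- Let u, M, N be real 2×2 matrices, each symmetric with trace zero. Set D₁ := 2·tr(u·M), D₂ := 2·tr(u·N), and P := tr(M²)·D₂ − tr(M·N)·D₁. Then P² = det(M·N − N·M) · (4·tr(M²)·tr(u²) − D₁²). -/
open Matrix

/-- For real 2×2 symmetric trace-free matrices `u, M, N`, with
`D₁ = 2 tr(u M)`, `D₂ = 2 tr(u N)` and `P = tr(M²) D₂ − tr(M N) D₁`, one has
`P² = det(MN − NM) · (4 tr(M²) tr(u²) − D₁²)`. -/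
theorem stmt0 (u M N : Matrix (Fin 2) (Fin 2) ℝ)
    (hu : u.IsSymm) (hM : M.IsSymm) (hN : N.IsSymm)
    (htu : u.trace = 0) (htM : M.trace = 0) (htN : N.trace = 0)
    (D₁ D₂ P : ℝ)
    (hD₁ : D₁ = 2 * (u * M).trace)
    (hD₂ : D₂ = 2 * (u * N).trace)
    (hP : P = (M * M).trace * D₂ - (M * N).trace * D₁) :
    P ^ 2 = (M * N - N * M).det * (4 * (M * M).trace * (u * u).trace - D₁ ^ 2) := by
  have hu' : u 1 0 = u 0 1 := by
    have := congrFun (congrFun hu 1) 0; simpa [Matrix.transpose_apply] using this.symm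
  have hM' : M 1 0 = M 0 1 := by
    have := congrFun (congrFun hM 1) 0; simpa [Matrix.transpose_apply] using this.symm
  have hN' : N 1 0 = N 0 1 := by
    have := congrFun (congrFun hN 1) 0; simpa [Matrix.transpose_apply] using this.symm
  have htu' : u 1 1 = -u 0 0 := by
    have := htu; rw [Matrix.trace_fin_two] at this; linarith
  have htM' : M 1 1 = -M 0 0 := by
    have := htM; rw [Matrix.trace_fin_two] at this; linarith
  have htN' : N 1 1 = -N 0 0 := by
    have := htN; rw [Matrix.trace_fin_two] at this; linarith
  subst hD₁ hD₂ hP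
  simp only [Matrix.det_fin_two, Matrix.trace_fin_two, Matrix.mul_apply,
    Matrix.sub_apply, Fin.sum_univ_two, hu', hM', hN', htu', htM', htN']
  ring
end

section
/- Let V be a 3-dimensional real inner product space and ρ : V → V a symmetric (self-adjoint) linear map. For v ∈ V define the linear map J(v) : V → V by J(v)x = ⟨v,v⟩·ρx − ⟨ρx,v⟩·v + ⟨ρv,v⟩·x − ⟨x,v⟩·ρv. Then for every v ∈ V one has tr(J(v)∘J(v)) = (tr(ρ²)·⟨v,v⟩ + 2·tr(ρ)·⟨ρv,v⟩ − 2·⟨ρv,ρv⟩)·⟨v,v⟩ + ⟨ρv,v⟩². -/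
open scoped RealInnerProductSpace

lemma trace_inner {V : Type*} [NormedAddCommGroup V] [InnerProductSpace ℝ V]
    [FiniteDimensional ℝ V] {ι : Type*} [Fintype ι] [DecidableEq ι]
    (b : OrthonormalBasis ι ℝ V) (T : V →ₗ[ℝ] V) :
    LinearMap.trace ℝ V T = ∑ i, ⟪b i, T (b i)⟫ := by
  rw [LinearMap.trace_eq_matrix_trace ℝ b.toBasis, Matrix.trace]
  simp [Matrix.diag, LinearMap.toMatrix_apply, OrthonormalBasis.coe_toBasis_repr_apply,
    OrthonormalBasis.repr_apply_apply]

/-- trace identity for the algebraic Jacobi operator of a symmetric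
map `ρ` on a 3-dimensional real inner product space. -/
theorem stmt1 {V : Type*} [NormedAddCommGroup V] [InnerProductSpace ℝ V]
    [FiniteDimensional ℝ V] (hdim : Module.finrank ℝ V = 3)
    (ρ : V →ₗ[ℝ] V) (hρ : ρ.IsSymmetric)
    (J : V → V →ₗ[ℝ] V)
    (hJ : ∀ v x, J v x = ⟪v, v⟫ • ρ x - ⟪ρ x, v⟫ • v + ⟪ρ v, v⟫ • x - ⟪x, v⟫ • ρ v)
    (v : V) :
    LinearMap.trace ℝ V (J v ∘ₗ J v) =
      (LinearMap.trace ℝ V (ρ ∘ₗ ρ) * ⟪v, v⟫ + 2 * LinearMap.trace ℝ V ρ * ⟪ρ v, v⟫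
        - 2 * ⟪ρ v, ρ v⟫) * ⟪v, v⟫ + ⟪ρ v, v⟫ ^ 2 := by
  have key : ∀ u : V, ⟪u, (J v ∘ₗ J v) u⟫ =
      ⟪v, v⟫ ^ 2 * ⟪u, ρ (ρ u)⟫ + 2 * ⟪v, v⟫ * ⟪ρ v, v⟫ * ⟪u, ρ u⟫
        + ⟪ρ v, v⟫ ^ 2 * ⟪u, u⟫
        - 2 * ⟪v, v⟫ * (⟪u, v⟫ * ⟪u, ρ (ρ v)⟫) - ⟪v, v⟫ * (⟪u, ρ v⟫ * ⟪u, ρ v⟫)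
        - 2 * ⟪ρ v, v⟫ * (⟪u, v⟫ * ⟪u, ρ v⟫) + ⟪ρ v, ρ v⟫ * (⟪u, v⟫ * ⟪u, v⟫) := by
    intro u
    simp only [LinearMap.comp_apply, hJ, map_sub, map_add, map_smul,
      inner_sub_right, inner_add_right, real_inner_smul_right, smul_sub, smul_add,
      smul_smul, inner_sub_left, inner_add_left, real_inner_smul_left]
    simp only [hρ _ _]
    ring
  set b := stdOrthonormalBasis ℝ V with hb
  have h4 : ∀ x y : V, ∑ i, ⟪b i, x⟫ * ⟪b i, y⟫ = ⟪x, y⟫ := by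
    intro x y
    rw [← b.sum_inner_mul_inner x y]
    exact Finset.sum_congr rfl fun i _ => by rw [real_inner_comm x (b i)]
  have h1 : ∑ i, ⟪b i, ρ (ρ (b i))⟫ = LinearMap.trace ℝ V (ρ ∘ₗ ρ) := by
    rw [trace_inner b (ρ ∘ₗ ρ)]; simp [LinearMap.comp_apply]
  have h2 : ∑ i, ⟪b i, ρ (b i)⟫ = LinearMap.trace ℝ V ρ := (trace_inner b ρ).symm
  have h3 : ∑ i, ⟪b i, b i⟫ = (3 : ℝ) := by
    have ho := b.orthonormal
    rw [orthonormal_iff_ite] at ho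
    simp [ho, hdim]
  rw [trace_inner b (J v ∘ₗ J v)]
  simp only [key]
  simp only [Finset.sum_add_distrib, Finset.sum_sub_distrib, ← Finset.mul_sum]
  rw [h1, h2, h3, h4, h4, h4, h4, hρ v (ρ v), hρ v v]
  ring
end

section
/- Let I ⊆ ℝ be an open interval and let u, J : I → M₂(ℝ) be maps into the real 2×2 matrices such that u is differentiable, J is twice differentiable, u(t) is symmetric with tr u(t) = 0 for every t ∈ I, and the Riccati equation u′(t) + u(t)² + J(t) = 0 holds on I. Then for all t ∈ I one has 2·tr(u(t)·J′(t)) = 2·tr(J(t)²) − (tr J(t))² + tr(J″(t)). -/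
attribute [local instance] Matrix.normedAddCommGroup Matrix.normedSpace

abbrev M2 := Matrix (Fin 2) (Fin 2) ℝ

lemma trace_eq' (A : M2) : A.trace = A 0 0 + A 1 1 := by
  simp [Matrix.trace, Fin.sum_univ_two]

lemma trace_mul_eq' (A B : M2) :
    (A * B).trace = A 0 0 * B 0 0 + A 0 1 * B 1 0 + A 1 0 * B 0 1 + A 1 1 * B 1 1 := by
  simp [Matrix.trace, Matrix.mul_apply, Fin.sum_univ_two]
  ring

lemma hasDerivAt_entry {f : ℝ → M2} {f' : M2} {t : ℝ}
    (h : HasDerivAt f f' t) (i j : Fin 2) :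
    HasDerivAt (fun s => f s i j) (f' i j) t := by
  let L : M2 →ₗ[ℝ] ℝ :=
    { toFun := fun A => A i j, map_add' := fun _ _ => rfl, map_smul' := fun _ _ => rfl }
  exact L.toContinuousLinearMap.hasFDerivAt.comp_hasDerivAt t h

lemma hasDerivAt_trace' {f : ℝ → M2} {f' : M2} {t : ℝ} (h : HasDerivAt f f' t) :
    HasDerivAt (fun s => (f s).trace) f'.trace t := by
  have := (hasDerivAt_entry h 0 0).add (hasDerivAt_entry h 1 1)
  have h2 : (fun s => (f s).trace) = (fun s => f s 0 0) + (fun s => f s 1 1) :=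
    funext fun s => trace_eq' _
  rw [h2, trace_eq']
  exact this

lemma hasDerivAt_trace_mul' {f g : ℝ → M2} {f' g' : M2} {t : ℝ}
    (hf : HasDerivAt f f' t) (hg : HasDerivAt g g' t) :
    HasDerivAt (fun s => (f s * g s).trace)
      ((f' * g t).trace + (f t * g').trace) t := by
  have H := ((((hasDerivAt_entry hf 0 0).mul (hasDerivAt_entry hg 0 0)).add
      ((hasDerivAt_entry hf 0 1).mul (hasDerivAt_entry hg 1 0))).add
      ((hasDerivAt_entry hf 1 0).mul (hasDerivAt_entry hg 0 1))).add
      ((hasDerivAt_entry hf 1 1).mul (hasDerivAt_entry hg 1 1))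
  have hfun : (fun s => (f s * g s).trace) =
      fun s => f s 0 0 * g s 0 0 + f s 0 1 * g s 1 0 + f s 1 0 * g s 0 1 + f s 1 1 * g s 1 1 :=
    funext fun s => trace_mul_eq' _ _
  rw [hfun]
  convert H using 1
  all_goals try rfl
  rw [trace_mul_eq', trace_mul_eq']
  ring

lemma deriv_unique_on {I : Set ℝ} (hI : IsOpen I) {t : ℝ} (ht : t ∈ I)
    {f g : ℝ → ℝ} {a b : ℝ} (hf : HasDerivAt f a t) (hg : HasDerivAt g b t)
    (h : ∀ s ∈ I, f s = g s) : a = b := by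
  have hev : f =ᶠ[nhds t] g := Filter.eventuallyEq_of_mem (hI.mem_nhds ht) h
  exact hf.unique (hg.congr_of_eventuallyEq hev)

/-- second-order consequence of the Riccati equation
`u′ + u² + J = 0` for symmetric trace-free 2×2 matrix solutions on an open
interval: `2 tr(u J′) = 2 tr(J²) − (tr J)² + tr J″`. -/
theorem stmt5 (I : Set ℝ) (hIopen : IsOpen I) (hIconn : I.OrdConnected)
    (u u' J J' J'' : ℝ → Matrix (Fin 2) (Fin 2) ℝ)
    (hderivu : ∀ t ∈ I, HasDerivAt u (u' t) t)
    (hderivJ : ∀ t ∈ I, HasDerivAt J (J' t) t)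
    (hderivJ' : ∀ t ∈ I, HasDerivAt J' (J'' t) t)
    (hsym : ∀ t ∈ I, (u t).IsSymm) (htr : ∀ t ∈ I, (u t).trace = 0)
    (hric : ∀ t ∈ I, u' t + (u t) ^ 2 + J t = 0) :
    ∀ t ∈ I, 2 * (u t * J' t).trace =
      2 * ((J t ^ 2).trace) - ((J t).trace) ^ 2 + (J'' t).trace := by
  -- entrywise Riccati equation
  have hricc : ∀ t ∈ I, ∀ i j : Fin 2,
      u' t i j = -(u t i 0 * u t 0 j + u t i 1 * u t 1 j) - J t i j := by
    intro t ht i j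
    have h := hric t ht
    have h2 := congrFun (congrFun h i) j
    simp only [Matrix.add_apply, Matrix.zero_apply, pow_two, Matrix.mul_apply,
      Fin.sum_univ_two] at h2
    linarith
  -- trace of u' vanishes on I
  have hA : ∀ t ∈ I, (u' t).trace = 0 := by
    intro t ht
    exact deriv_unique_on hIopen ht (hasDerivAt_trace' (hderivu t ht))
      (hasDerivAt_const t 0) (fun s hs => htr s hs)
  -- trace of u² equals -trace J on I
  have hB : ∀ t ∈ I, (u t * u t).trace = -(J t).trace := by
    intro t ht
    have h := congrArg Matrix.trace (hric t ht)
    simp only [Matrix.trace_add, Matrix.trace_zero, pow_two] at h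
    have := hA t ht
    linarith
  -- first-order consequence: tr(uJ) = tr(J')/2 on I
  have hE : ∀ t ∈ I, (u t * J t).trace = (J' t).trace / 2 := by
    intro t ht
    have h1 := hasDerivAt_trace_mul' (hderivu t ht) (hderivu t ht)
    have h2 := (hasDerivAt_trace' (hderivJ t ht)).neg
    have hkey := deriv_unique_on hIopen ht h1 h2 hB
    have h00 := hricc t ht 0 0
    have h01 := hricc t ht 0 1
    have h10 := hricc t ht 1 0
    have h11 := hricc t ht 1 1
    have ht0 : u t 0 0 + u t 1 1 = 0 := by
      have := htr t ht; rwa [trace_eq'] at this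
    rw [trace_mul_eq', trace_mul_eq', trace_eq'] at hkey
    rw [trace_mul_eq', trace_eq']
    linear_combination (-1/2 : ℝ) * hkey + u t 0 0 * h00 + u t 1 0 * h01 +
      u t 0 1 * h10 + u t 1 1 * h11 -
      (u t 0 0 ^ 2 - u t 0 0 * u t 1 1 + u t 1 1 ^ 2 + 3 * u t 0 1 * u t 1 0) * ht0
  -- second-order consequence
  intro t ht
  have h1 := hasDerivAt_trace_mul' (hderivu t ht) (hderivJ t ht)
  have h2 := (hasDerivAt_trace' (hderivJ' t ht)).div_const 2
  have hkey2 := deriv_unique_on hIopen ht h1 h2 hE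
  have h00 := hricc t ht 0 0
  have h01 := hricc t ht 0 1
  have h10 := hricc t ht 1 0
  have h11 := hricc t ht 1 1
  have ht0 : u t 0 0 + u t 1 1 = 0 := by
    have := htr t ht; rwa [trace_eq'] at this
  have hAt : u' t 0 0 + u' t 1 1 = 0 := by
    have := hA t ht; rwa [trace_eq'] at this
  rw [trace_mul_eq', trace_mul_eq', trace_eq'] at hkey2
  rw [trace_mul_eq', pow_two, trace_mul_eq', trace_eq', trace_eq']
  linear_combination (2 : ℝ) * hkey2 + (J t 1 1 - J t 0 0) * h00 -
    2 * J t 1 0 * h01 - 2 * J t 0 1 * h10 + (J t 0 0 - J t 1 1) * h11 -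
    (J t 0 0 + J t 1 1) * hAt +
    (2 * (u t 0 1 * J t 1 0 + u t 1 0 * J t 0 1) +
      (J t 0 0 - J t 1 1) * (u t 0 0 - u t 1 1)) * ht0
end

section
/- Let V be a 3-dimensional real inner product space with orthonormal basis {e₁,e₂,e₃}, let λ₂ < 0 and λ₃ < 0 be reals, and let Ric : V → V be the symmetric map with Ric e₁ = 0, Ric e₂ = λ₂·e₂, Ric e₃ = λ₃·e₃; set scal = λ₂ + λ₃. Define R(X,Y) := Ric X ∧ Y + X ∧ Ric Y − (scal/2)·X ∧ Y and J(w)x := R(x,w)w. Suppose w ∈ V is a unit vector for which there exists λ ∈ ℝ with J(w)x = λ·x for every x orthogonal to w. Then: if λ₂ < λ₃, there are signs ε, δ ∈ {±1} with w = ε·(√(λ₃/λ₂)·e₁ + δ·√((λ₂−λ₃)/λ₂)·e₂); if λ₃ < λ₂, there are signs ε, δ ∈ {±1} with w = ε·(√(λ₂/λ₃)·e₁ + δ·√((λ₃−λ₂)/λ₃)·e₃); and if λ₂ = λ₃, then w = e₁ or w = −e₁. -/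
open scoped RealInnerProductSpace

set_option maxHeartbeats 1000000 in
/-- classification, up to signs, of the unit directions `w` along
which the Jacobi operator of a degenerate Ricci operator with eigenvalues
`0, λ₂, λ₃ < 0` on a 3-dimensional inner product space is pure trace. -/
theorem stmt6 {V : Type*} [NormedAddCommGroup V] [InnerProductSpace ℝ V]
    [FiniteDimensional ℝ V] (hdim : Module.finrank ℝ V = 3)
    (b : OrthonormalBasis (Fin 3) ℝ V)
    (lam₂ lam₃ : ℝ) (h₂ : lam₂ < 0) (h₃ : lam₃ < 0)
    (Ric : V →ₗ[ℝ] V) (hRicSym : Ric.IsSymmetric)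
    (hR1 : Ric (b 0) = 0) (hR2 : Ric (b 1) = lam₂ • b 1) (hR3 : Ric (b 2) = lam₃ • b 2)
    (scal : ℝ) (hscal : scal = lam₂ + lam₃)
    (wedge : V → V → V → V)
    (hwedge : ∀ X Y Z, wedge X Y Z = ⟪Y, Z⟫ • X - ⟪X, Z⟫ • Y)
    (R : V → V → V → V)
    (hR : ∀ X Y Z, R X Y Z = wedge (Ric X) Y Z + wedge X (Ric Y) Z - (scal / 2) • wedge X Y Z)
    (Jop : V → V → V) (hJ : ∀ w x, Jop w x = R x w w)
    (w : V) (hw : ‖w‖ = 1)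
    (lam : ℝ) (heig : ∀ x : V, ⟪x, w⟫ = 0 → Jop w x = lam • x) :
    (lam₂ < lam₃ → ∃ ε δ : ℝ, (ε = 1 ∨ ε = -1) ∧ (δ = 1 ∨ δ = -1) ∧
      w = ε • (Real.sqrt (lam₃ / lam₂) • b 0 + δ • (Real.sqrt ((lam₂ - lam₃) / lam₂) • b 1))) ∧
    (lam₃ < lam₂ → ∃ ε δ : ℝ, (ε = 1 ∨ ε = -1) ∧ (δ = 1 ∨ δ = -1) ∧
      w = ε • (Real.sqrt (lam₂ / lam₃) • b 0 + δ • (Real.sqrt ((lam₃ - lam₂) / lam₃) • b 2))) ∧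
    (lam₂ = lam₃ → w = b 0 ∨ w = -(b 0)) := by
  have hon := orthonormal_iff_ite.mp b.orthonormal
  have h00 : ⟪b 0, b 0⟫ = 1 := by simpa using hon 0 0
  have h11 : ⟪b 1, b 1⟫ = 1 := by simpa using hon 1 1
  have h22 : ⟪b 2, b 2⟫ = 1 := by simpa using hon 2 2
  have h01 : ⟪b 0, b 1⟫ = 0 := by simpa using hon 0 1
  have h02 : ⟪b 0, b 2⟫ = 0 := by simpa using hon 0 2
  have h12 : ⟪b 1, b 2⟫ = 0 := by simpa using hon 1 2
  have h10 : ⟪b 1, b 0⟫ = 0 := by simpa using hon 1 0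
  have h20 : ⟪b 2, b 0⟫ = 0 := by simpa using hon 2 0
  have h21 : ⟪b 2, b 1⟫ = 0 := by simpa using hon 2 1
  have hww : ⟪w, w⟫ = 1 := by
    rw [real_inner_self_eq_norm_sq, hw]; norm_num
  obtain ⟨a, p, q, ha, hp, hq⟩ : ∃ a p q : ℝ, a = ⟪b 0, w⟫ ∧ p = ⟪b 1, w⟫ ∧ q = ⟪b 2, w⟫ :=
    ⟨_, _, _, rfl, rfl, rfl⟩
  have hwrep : w = a • b 0 + p • b 1 + q • b 2 := by
    have h := b.sum_repr w
    rw [Fin.sum_univ_three] at h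
    simp only [OrthonormalBasis.repr_apply_apply] at h
    rw [ha, hp, hq]
    exact h.symm
  obtain ⟨mu, key⟩ : ∃ mu : ℝ, ∀ x y : V, ⟪x, w⟫ = 0 → ⟪y, w⟫ = 0 →
      ⟪Ric x, y⟫ = mu * ⟪x, y⟫ := by
    refine ⟨lam - ⟪Ric w, w⟫ + scal / 2, fun x y hx hy => ?_⟩
    have hwy : ⟪w, y⟫ = 0 := by rw [real_inner_comm]; exact hy
    have h := heig x hx
    rw [hJ, hR, hwedge, hwedge, hwedge] at h
    have h2 := congrArg (fun v => ⟪v, y⟫) h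
    simp only [inner_add_left, inner_sub_left, real_inner_smul_left] at h2
    rw [hww, hx, hwy] at h2
    linear_combination h2
  -- the three test vectors
  have hx1 : ⟪p • b 0 - a • b 1, w⟫ = 0 := by
    simp only [inner_sub_left, real_inner_smul_left, ← ha, ← hp]; ring
  have hx2 : ⟪q • b 0 - a • b 2, w⟫ = 0 := by
    simp only [inner_sub_left, real_inner_smul_left, ← ha, ← hq]; ring
  have hx3 : ⟪q • b 1 - p • b 2, w⟫ = 0 := by
    simp only [inner_sub_left, real_inner_smul_left, ← hp, ← hq]; ring
  have E11 : a^2 * lam₂ = mu * (a^2 + p^2) := by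
    have h := key _ _ hx1 hx1
    simp only [map_sub, map_smul, hR1, hR2, smul_smul, smul_zero, zero_sub,
      inner_sub_left, inner_sub_right, real_inner_smul_left, real_inner_smul_right,
      inner_neg_left, h00, h11, h01, h10, inner_zero_left] at h
    linear_combination h
  have E22 : a^2 * lam₃ = mu * (a^2 + q^2) := by
    have h := key _ _ hx2 hx2
    simp only [map_sub, map_smul, hR1, hR3, smul_smul, smul_zero, zero_sub,
      inner_sub_left, inner_sub_right, real_inner_smul_left, real_inner_smul_right,
      inner_neg_left, h00, h22, h02, h20, inner_zero_left] at h
    linear_combination h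
  have E33 : q^2 * lam₂ + p^2 * lam₃ = mu * (p^2 + q^2) := by
    have h := key _ _ hx3 hx3
    simp only [map_sub, map_smul, hR2, hR3, smul_smul,
      inner_sub_left, inner_sub_right, real_inner_smul_left, real_inner_smul_right,
      h11, h22, h12, h21] at h
    linear_combination h
  have E12 : 0 = mu * (p * q) := by
    have h := key _ _ hx1 hx2
    simp only [map_sub, map_smul, hR1, hR2, smul_smul, smul_zero, zero_sub,
      inner_sub_left, inner_sub_right, real_inner_smul_left, real_inner_smul_right,
      inner_neg_left, h00, h11, h01, h10, h12, h02, h20, h21, h22, inner_zero_left] at h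
    linear_combination h
  have E13 : a * q * lam₂ = mu * (a * q) := by
    have h := key _ _ hx1 hx3
    simp only [map_sub, map_smul, hR1, hR2, smul_smul, smul_zero, zero_sub,
      inner_sub_left, inner_sub_right, real_inner_smul_left, real_inner_smul_right,
      inner_neg_left, h00, h11, h01, h10, h12, h02, h20, h21, h22, inner_zero_left] at h
    linear_combination -h
  have E23 : a * p * lam₃ = mu * (a * p) := by
    have h := key _ _ hx2 hx3
    simp only [map_sub, map_smul, hR1, hR3, smul_smul, smul_zero, zero_sub,
      inner_sub_left, inner_sub_right, real_inner_smul_left, real_inner_smul_right,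
      inner_neg_left, h00, h11, h01, h10, h12, h02, h20, h21, h22, inner_zero_left] at h
    linear_combination h
  have hn : a^2 + p^2 + q^2 = 1 := by
    have h : ⟪a • b 0 + p • b 1 + q • b 2, a • b 0 + p • b 1 + q • b 2⟫ = 1 := by
      rw [← hwrep]; exact hww
    simp only [inner_add_left, inner_add_right, real_inner_smul_left, real_inner_smul_right,
      h00, h11, h22, h01, h02, h12, h10, h20, h21] at h
    linear_combination h
  clear hww hwedge hR hJ heig hRicSym hR1 hR2 hR3 hx1 hx2 hx3 key
  -- a ≠ 0
  have ha0 : a ≠ 0 := by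
    intro h0
    have e1 : mu * p^2 = 0 := by rw [h0] at E11; linear_combination -E11
    have e2 : mu * q^2 = 0 := by rw [h0] at E22; linear_combination -E22
    have hn' : p^2 + q^2 = 1 := by rw [h0] at hn; linarith
    have hmu0 : mu = 0 := by linear_combination e1 + e2 - mu * hn'
    have e3 : q^2 * lam₂ + p^2 * lam₃ = 0 := by rw [hmu0] at E33; linarith
    rcases eq_or_lt_of_le (sq_nonneg p) with hep | hlp
    · have hq21 : q^2 = 1 := by linarith
      have : lam₂ = 0 := by linear_combination e3 - lam₂ * hq21 + lam₃ * hep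
      exact absurd this (ne_of_lt h₂)
    · nlinarith [mul_pos hlp (neg_pos.mpr h₃),
        mul_nonneg (sq_nonneg q) (neg_nonneg.mpr h₂.le), e3]
  -- trichotomy
  have main : (q = 0 ∧ lam₂ < lam₃ ∧ a^2 = lam₃/lam₂ ∧ p^2 = (lam₂-lam₃)/lam₂) ∨
      (p = 0 ∧ lam₃ < lam₂ ∧ a^2 = lam₂/lam₃ ∧ q^2 = (lam₃-lam₂)/lam₃) ∨
      (p = 0 ∧ q = 0 ∧ lam₂ = lam₃ ∧ a^2 = 1) := by
    have hpq : p = 0 ∨ q = 0 := by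
      by_contra hcon
      push_neg at hcon
      have hmu0 : mu = 0 := by
        rcases mul_eq_zero.mp E12.symm with h | h
        · exact h
        · rcases mul_eq_zero.mp h with h' | h'
          · exact absurd h' hcon.1
          · exact absurd h' hcon.2
      rw [hmu0] at E11
      have hz : a^2 * lam₂ = 0 := by linarith
      rcases mul_eq_zero.mp hz with h | h
      · exact ha0 (by
          have := sq_eq_zero_iff.mp h
          exact this)
      · exact absurd h (ne_of_lt h₂)
    rcases hpq with hp0 | hq0
    · by_cases hq0 : q = 0
      · -- p = q = 0
        right; right
        subst hp0; subst hq0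
        have ha2 : a^2 = 1 := by nlinarith [hn]
        have hmu2 : mu = lam₂ := by rw [ha2] at E11; norm_num at E11; linarith
        have hmu3 : mu = lam₃ := by rw [ha2] at E22; norm_num at E22; linarith
        exact ⟨rfl, rfl, by linarith, ha2⟩
      · -- p = 0, q ≠ 0 : case B
        right; left
        subst hp0
        have hmuv : mu = lam₂ := by
          rcases mul_eq_zero.mp (show (lam₂ - mu) * (a*q) = 0 by linear_combination E13)
            with h | h
          · linarith
          · exact absurd h (mul_ne_zero ha0 hq0)
        rw [hmuv] at E22
        have ha2' : a^2 * lam₃ = lam₂ := by linear_combination E22 + lam₂ * hn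
        have ha2 : a^2 = lam₂ / lam₃ := by rw [eq_div_iff (ne_of_lt h₃)]; exact ha2'
        have hq2' : q^2 * lam₃ = lam₃ - lam₂ := by linear_combination lam₃ * hn - ha2'
        have hq2 : q^2 = (lam₃ - lam₂) / lam₃ := by
          rw [eq_div_iff (ne_of_lt h₃)]; exact hq2'
        have hlt : lam₃ < lam₂ := by
          have hq2pos : 0 < q^2 := by positivity
          nlinarith [mul_pos hq2pos (neg_pos.mpr h₃), hq2']
        exact ⟨rfl, hlt, ha2, hq2⟩
    · by_cases hp0 : p = 0
      · right; right
        subst hp0; subst hq0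
        have ha2 : a^2 = 1 := by nlinarith [hn]
        have hmu2 : mu = lam₂ := by rw [ha2] at E11; norm_num at E11; linarith
        have hmu3 : mu = lam₃ := by rw [ha2] at E22; norm_num at E22; linarith
        exact ⟨rfl, rfl, by linarith, ha2⟩
      · -- q = 0, p ≠ 0 : case A
        left
        subst hq0
        have hmuv : mu = lam₃ := by
          rcases mul_eq_zero.mp (show (lam₃ - mu) * (a*p) = 0 by linear_combination E23)
            with h | h
          · linarith
          · exact absurd h (mul_ne_zero ha0 hp0)
        rw [hmuv] at E11
        have ha2' : a^2 * lam₂ = lam₃ := by linear_combination E11 + lam₃ * hn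
        have ha2 : a^2 = lam₃ / lam₂ := by rw [eq_div_iff (ne_of_lt h₂)]; exact ha2'
        have hp2' : p^2 * lam₂ = lam₂ - lam₃ := by linear_combination lam₂ * hn - ha2'
        have hp2 : p^2 = (lam₂ - lam₃) / lam₂ := by
          rw [eq_div_iff (ne_of_lt h₂)]; exact hp2'
        have hlt : lam₂ < lam₃ := by
          have hp2pos : 0 < p^2 := by positivity
          nlinarith [mul_pos hp2pos (neg_pos.mpr h₂), hp2']
        exact ⟨rfl, hlt, ha2, hp2⟩
  refine ⟨?_, ?_, ?_⟩
  · -- lam₂ < lam₃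
    intro hlt
    rcases main with ⟨hq0, _, ha2, hp2⟩ | ⟨_, hlt', _, _⟩ | ⟨_, _, heq, _⟩
    · have hsq : Real.sqrt (lam₃ / lam₂) = |a| := by rw [← ha2, Real.sqrt_sq_eq_abs]
      have hsp : Real.sqrt ((lam₂ - lam₃) / lam₂) = |p| := by
        rw [← hp2, Real.sqrt_sq_eq_abs]
      rw [hsq, hsp]
      rcases le_or_gt 0 a with hA | hA <;> rcases le_or_gt 0 p with hP | hP
      · exact ⟨1, 1, Or.inl rfl, Or.inl rfl, by
          rw [hwrep, hq0, abs_of_nonneg hA, abs_of_nonneg hP]; module⟩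
      · exact ⟨1, -1, Or.inl rfl, Or.inr rfl, by
          rw [hwrep, hq0, abs_of_nonneg hA, abs_of_neg hP]; module⟩
      · exact ⟨-1, -1, Or.inr rfl, Or.inr rfl, by
          rw [hwrep, hq0, abs_of_neg hA, abs_of_nonneg hP]; module⟩
      · exact ⟨-1, 1, Or.inr rfl, Or.inl rfl, by
          rw [hwrep, hq0, abs_of_neg hA, abs_of_neg hP]; module⟩
    · exact absurd hlt (by linarith)
    · exact absurd hlt (by rw [heq]; exact lt_irrefl _)
  · intro hlt
    rcases main with ⟨_, hlt', _, _⟩ | ⟨hp0, _, ha2, hq2⟩ | ⟨_, _, heq, _⟩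
    · exact absurd hlt (by linarith)
    · have hsq : Real.sqrt (lam₂ / lam₃) = |a| := by rw [← ha2, Real.sqrt_sq_eq_abs]
      have hsp : Real.sqrt ((lam₃ - lam₂) / lam₃) = |q| := by
        rw [← hq2, Real.sqrt_sq_eq_abs]
      rw [hsq, hsp]
      rcases le_or_gt 0 a with hA | hA <;> rcases le_or_gt 0 q with hP | hP
      · exact ⟨1, 1, Or.inl rfl, Or.inl rfl, by
          rw [hwrep, hp0, abs_of_nonneg hA, abs_of_nonneg hP]; module⟩
      · exact ⟨1, -1, Or.inl rfl, Or.inr rfl, by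
          rw [hwrep, hp0, abs_of_nonneg hA, abs_of_neg hP]; module⟩
      · exact ⟨-1, -1, Or.inr rfl, Or.inr rfl, by
          rw [hwrep, hp0, abs_of_neg hA, abs_of_nonneg hP]; module⟩
      · exact ⟨-1, 1, Or.inr rfl, Or.inl rfl, by
          rw [hwrep, hp0, abs_of_neg hA, abs_of_neg hP]; module⟩
    · exact absurd hlt (by rw [heq]; exact lt_irrefl _)
  · intro heq
    rcases main with ⟨_, hlt', _, _⟩ | ⟨_, hlt', _, _⟩ | ⟨hp0, hq0, _, ha2⟩
    · exact absurd heq (by intro h; rw [h] at hlt'; exact lt_irrefl _ hlt')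
    · exact absurd heq (by intro h; rw [h] at hlt'; exact lt_irrefl _ hlt')
    · have h1 : (a - 1) * (a + 1) = 0 := by linear_combination ha2
      rcases mul_eq_zero.mp h1 with h | h
      · left
        rw [hwrep, hp0, hq0, show a = 1 by linarith]
        simp
      · right
        rw [hwrep, hp0, hq0, show a = -1 by linarith]
        simp
end

section
/- Let μ and ν be negative real numbers, set Λ := −8μ, and let a := ((ν−μ)/2)·X² + ν/2 in the polynomial ring ℝ[X]. Suppose P, d₁, c ∈ ℝ[X] have degrees deg P ≤ 5, deg d₁ ≤ 2, deg c ≤ 2 and satisfy P² + (X²+1)·(d₁·c)² = Λ·(X²+1)·(a·c)². Then one of the following holds: (i) c = 0 and P = 0; (ii) P = 0 and (d₁ = √Λ·a or d₁ = −√Λ·a); (iii) ν < μ and (d₁ = √(−2μ)·((μ−ν)·X² + (2μ−ν)) or d₁ = −√(−2μ)·((μ−ν)·X² + (2μ−ν))). -/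
open Polynomial
set_option maxHeartbeats 1000000


private lemma rep2 (p : ℝ[X]) (h : p.natDegree ≤ 2) :
    p = C (p.coeff 2) * X ^ 2 + C (p.coeff 1) * X + C (p.coeff 0) := by
  ext n
  rcases n with _|_|_|n <;>
    simp [coeff_add, coeff_C_mul, coeff_X_pow, coeff_C]
  · exact coeff_eq_zero_of_natDegree_lt (lt_of_le_of_lt h (by omega))

private lemma rep1 (p : ℝ[X]) (h : p.natDegree ≤ 1) :
    p = C (p.coeff 1) * X + C (p.coeff 0) := by
  ext n
  rcases n with _|_|n <;>
    simp [coeff_add, coeff_C_mul, coeff_X, coeff_C]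
  · exact coeff_eq_zero_of_natDegree_lt (lt_of_le_of_lt h (by omega))

private lemma Sprime : Prime (X ^ 2 + 1 : ℝ[X]) := by
  have hdeg : (X ^ 2 + 1 : ℝ[X]).natDegree = 2 := by compute_degree!
  have hirr : Irreducible (X ^ 2 + 1 : ℝ[X]) := by
    rw [Polynomial.irreducible_iff_roots_eq_zero_of_degree_le_three (by omega) (by omega)]
    rw [Multiset.eq_zero_iff_forall_notMem]
    intro r hr
    have h0 : (X ^ 2 + 1 : ℝ[X]) ≠ 0 := fun h => by simpa using congrArg (eval 0) h
    rw [mem_roots h0, IsRoot.def] at hr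
    simp at hr
    nlinarith [sq_nonneg r]
  exact hirr.prime


private lemma endgame (μ ν α β γ p q t : ℝ) (hμ : μ < 0) (hν : ν < 0)
    (ht : t ^ 2 = -2 * μ)
    (hpq : p ≠ 0 ∨ q ≠ 0)
    (hF : ∀ x : ℝ, (α * x ^ 2 + β * x + γ) ^ 2 + (x ^ 2 + 1) * (p * x + q) ^ 2
          = (-8 * μ) * (((ν - μ) / 2) * x ^ 2 + ν / 2) ^ 2) :
    ν < μ ∧
      ((α = t * (μ - ν) ∧ β = 0 ∧ γ = t * (2 * μ - ν)) ∨
       (α = -(t * (μ - ν)) ∧ β = 0 ∧ γ = -(t * (2 * μ - ν)))) := by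
  have g0 := hF 0
  have g1 := hF 1
  have gm1 := hF (-1)
  have g2 := hF 2
  have gm2 := hF (-2)
  have ht0 : (0:ℝ) < t ^ 2 := by rw [ht]; linarith
  have E0 : γ ^ 2 + q ^ 2 = t ^ 2 * ν ^ 2 := by linear_combination g0 - ν ^ 2 * ht
  have E1 : β * γ + p * q = 0 := by
    linear_combination (1/3) * g1 - (1/3) * gm1 - (1/24) * g2 + (1/24) * gm2
  have E2 : β ^ 2 + 2 * α * γ + p ^ 2 + q ^ 2 = 2 * t ^ 2 * ν * (ν - μ) := by
    linear_combination (2/3) * g1 + (2/3) * gm1 - (5/4) * g0 - (1/24) * g2 - (1/24) * gm2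
      - 2 * ν * (ν - μ) * ht
  have E3 : α * β + p * q = 0 := by
    linear_combination (1/24) * g2 - (1/24) * gm2 - (1/12) * g1 + (1/12) * gm1
  have E4 : α ^ 2 + p ^ 2 = t ^ 2 * (ν - μ) ^ 2 := by
    linear_combination (1/24) * g2 + (1/24) * gm2 - (1/6) * g1 - (1/6) * gm1 + (1/4) * g0
      - (ν - μ) ^ 2 * ht
  have hβ : β = 0 := by
    by_contra hb
    have h1 : β * (α - γ) = 0 := by linear_combination E3 - E1
    have h2 : α = γ := by
      rcases mul_eq_zero.mp h1 with h | h
      · exact absurd h hb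
      · linarith
    have key : (α - γ) ^ 2 - β ^ 2 = t ^ 2 * μ ^ 2 := by linear_combination E4 - E2 + E0
    rw [h2] at key
    have hμ2 : (0:ℝ) < μ ^ 2 := by nlinarith
    nlinarith [sq_nonneg β, mul_pos ht0 hμ2]
  have hpq0 : p * q = 0 := by rw [hβ] at E3; linarith
  have hq : q ≠ 0 := by
    intro hq0
    have hp : p ≠ 0 := by
      rcases hpq with h | h
      · exact h
      · exact absurd hq0 h
    rw [hq0] at E0
    rw [hβ, hq0] at E2
    have hkey : p ^ 2 * (p ^ 2 + 4 * t ^ 2 * ν * μ) = 0 := by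
      linear_combination (-(2 * t ^ 2 * ν * (ν - μ) - p ^ 2 + 2 * α * γ)) * E2
        + 4 * α ^ 2 * E0 + 4 * t ^ 2 * ν ^ 2 * E4
    have h4 : p ^ 2 + 4 * t ^ 2 * ν * μ = 0 := by
      rcases mul_eq_zero.mp hkey with h | h
      · exact absurd (pow_eq_zero_iff two_ne_zero |>.mp h) hp
      · exact h
    have hp2 : (0:ℝ) < p ^ 2 := by positivity
    have h6 : (0:ℝ) < t ^ 2 * (ν * μ) := mul_pos ht0 (mul_pos_of_neg_of_neg hν hμ)
    have h7 : p ^ 2 = -(4 * (t ^ 2 * (ν * μ))) := by linear_combination h4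
    linarith
  have hp0 : p = 0 := by
    rcases mul_eq_zero.mp hpq0 with h | h
    · exact h
    · exact absurd h hq
  rw [hβ, hp0] at E2
  rw [hp0] at E4
  have hq2 : (0:ℝ) < q ^ 2 := by positivity
  have hα : (α - t * (ν - μ)) * (α + t * (ν - μ)) = 0 := by linear_combination E4
  rcases mul_eq_zero.mp hα with h | h
  · have hα' : α = t * (ν - μ) := by linarith
    rw [hα'] at E2
    have hγfac : (γ - t * ν) * (γ - t * (ν - 2 * μ)) = 0 := by linear_combination E0 - E2
    rcases mul_eq_zero.mp hγfac with hg | hg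
    · exfalso
      have hγ' : γ = t * ν := by linarith
      rw [hγ'] at E0
      nlinarith
    · have hγ' : γ = t * (ν - 2 * μ) := by linarith
      have hq2eq : q ^ 2 = 4 * t ^ 2 * μ * (ν - μ) := by rw [hγ'] at E0; linear_combination E0
      have hνμ : ν < μ := by
        by_contra hge
        push_neg at hge
        nlinarith [mul_nonneg (mul_nonneg ht0.le (sub_nonneg.mpr hge)) (neg_nonneg.mpr hμ.le)]
      exact ⟨hνμ, Or.inr ⟨by linear_combination hα', hβ, by linear_combination hγ'⟩⟩
  · have hα' : α = -(t * (ν - μ)) := by linarith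
    rw [hα'] at E2
    have hγfac : (γ + t * ν) * (γ + t * (ν - 2 * μ)) = 0 := by linear_combination E0 - E2
    rcases mul_eq_zero.mp hγfac with hg | hg
    · exfalso
      have hγ' : γ = -(t * ν) := by linarith
      rw [hγ'] at E0
      nlinarith
    · have hγ' : γ = -(t * (ν - 2 * μ)) := by linarith
      have hq2eq : q ^ 2 = 4 * t ^ 2 * μ * (ν - μ) := by rw [hγ'] at E0; linear_combination E0
      have hνμ : ν < μ := by
        by_contra hge
        push_neg at hge
        nlinarith [mul_nonneg (mul_nonneg ht0.le (sub_nonneg.mpr hge)) (neg_nonneg.mpr hμ.le)]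
      exact ⟨hνμ, Or.inl ⟨by linear_combination hα', hβ, by linear_combination hγ'⟩⟩


/-- classification of the solutions of the polynomial constraint
`P² + (X²+1)(d₁c)² = Λ (X²+1)(ac)²` with `Λ = −8μ`, `a = ((ν−μ)/2)X² + ν/2`. -/
theorem stmt8 (μ ν : ℝ) (hμ : μ < 0) (hν : ν < 0)
    (Λ : ℝ) (hΛ : Λ = -8 * μ)
    (a : ℝ[X]) (ha : a = C ((ν - μ) / 2) * X ^ 2 + C (ν / 2))
    (P d₁ c : ℝ[X]) (hP : P.natDegree ≤ 5) (hd₁ : d₁.natDegree ≤ 2) (hc : c.natDegree ≤ 2)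
    (heq : P ^ 2 + (X ^ 2 + 1) * (d₁ * c) ^ 2 = C Λ * ((X ^ 2 + 1) * (a * c) ^ 2)) :
    (c = 0 ∧ P = 0) ∨
    (P = 0 ∧ (d₁ = C (Real.sqrt Λ) * a ∨ d₁ = -(C (Real.sqrt Λ) * a))) ∨
    (ν < μ ∧
      (d₁ = C (Real.sqrt (-2 * μ)) * (C (μ - ν) * X ^ 2 + C (2 * μ - ν)) ∨
       d₁ = -(C (Real.sqrt (-2 * μ)) * (C (μ - ν) * X ^ 2 + C (2 * μ - ν))))) := by
  subst hΛ
  subst ha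
  by_cases hcne : c = 0
  · left
    refine ⟨hcne, ?_⟩
    rw [hcne] at heq
    have h : P ^ 2 = 0 := by linear_combination heq
    exact pow_eq_zero_iff two_ne_zero |>.mp h
  right
  have hprime := Sprime
  have hSne : (X ^ 2 + 1 : ℝ[X]) ≠ 0 := hprime.ne_zero
  have hSdeg : (X ^ 2 + 1 : ℝ[X]).natDegree = 2 := by compute_degree!
  obtain ⟨D, hDdef⟩ : ∃ D : ℝ[X],
      D = C (-8 * μ) * (C ((ν - μ) / 2) * X ^ 2 + C (ν / 2)) ^ 2 - d₁ ^ 2 := ⟨_, rfl⟩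
  have key : P ^ 2 = (X ^ 2 + 1) * (c ^ 2 * D) := by rw [hDdef]; linear_combination heq
  have hD4 : D.natDegree ≤ 4 := by
    rw [hDdef]
    refine le_trans (natDegree_sub_le _ _) (max_le ?_ ?_)
    · compute_degree!
    · rw [natDegree_pow]; omega
  have hSP : (X ^ 2 + 1 : ℝ[X]) ∣ P := hprime.dvd_of_dvd_pow (n := 2) ⟨_, key⟩
  obtain ⟨Q, hPQ⟩ := hSP
  have key2 : (X ^ 2 + 1) * Q ^ 2 = c ^ 2 * D := by
    apply mul_left_cancel₀ hSne
    rw [hPQ] at key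
    linear_combination key
  by_cases hQ0 : Q = 0
  · -- case (ii)
    left
    have hP0 : P = 0 := by rw [hPQ, hQ0, mul_zero]
    refine ⟨hP0, ?_⟩
    have hcsq : c ^ 2 ≠ 0 := pow_ne_zero _ hcne
    have hD0 : D = 0 := by
      have h0 : c ^ 2 * D = 0 := by rw [← key2, hQ0]; ring
      exact (mul_eq_zero.mp h0).resolve_left hcsq
    have hs : Real.sqrt (-8 * μ) ^ 2 = -8 * μ := Real.sq_sqrt (by linarith)
    have hfac : (d₁ - C (Real.sqrt (-8 * μ)) * (C ((ν - μ) / 2) * X ^ 2 + C (ν / 2)))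
        * (d₁ + C (Real.sqrt (-8 * μ)) * (C ((ν - μ) / 2) * X ^ 2 + C (ν / 2))) = 0 := by
      rw [hDdef] at hD0
      have hC : (C (-8 * μ) : ℝ[X]) = C (Real.sqrt (-8 * μ)) ^ 2 := by
        rw [← C_pow, hs]
      rw [hC] at hD0
      linear_combination -hD0
    rcases mul_eq_zero.mp hfac with h | h
    · exact Or.inl (sub_eq_zero.mp h)
    · exact Or.inr (eq_neg_of_add_eq_zero_left h)
  · -- Q ≠ 0 : case (iii)
    right
    have hQ3 : Q.natDegree ≤ 3 := by
      have hm := natDegree_mul hSne hQ0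
      rw [← hPQ, hSdeg] at hm
      omega
    have common : ∀ c' W : ℝ[X], c' ≠ 0 → W ≠ 0 → ¬ (X ^ 2 + 1 : ℝ[X]) ∣ c' →
        (X ^ 2 + 1) * W ^ 2 = c' ^ 2 * D → ∃ r : ℝ[X], r ≠ 0 ∧ D = (X ^ 2 + 1) * r ^ 2 := by
      intro c' W hc' hW hnd hkey
      have hSD : (X ^ 2 + 1 : ℝ[X]) ∣ D := by
        have hdvd : (X ^ 2 + 1 : ℝ[X]) ∣ c' ^ 2 * D := ⟨W ^ 2, hkey.symm⟩
        rcases (hprime.dvd_mul).mp hdvd with h | h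
        · exact absurd (hprime.dvd_of_dvd_pow h) hnd
        · exact h
      obtain ⟨E, hDE⟩ := hSD
      have hQE : W ^ 2 = c' ^ 2 * E := by
        apply mul_left_cancel₀ hSne
        rw [hDE] at hkey
        linear_combination hkey
      have hcW : c' ∣ W := (IsIntegrallyClosed.pow_dvd_pow_iff two_ne_zero).mp ⟨E, hQE⟩
      obtain ⟨r, hWr⟩ := hcW
      refine ⟨r, ?_, ?_⟩
      · rintro rfl
        rw [mul_zero] at hWr
        exact hW hWr
      · have hEr : E = r ^ 2 := by
          apply mul_left_cancel₀ (pow_ne_zero 2 hc')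
          rw [hWr] at hQE
          linear_combination -hQE
        rw [hDE, hEr]
    have hex : ∃ r : ℝ[X], r ≠ 0 ∧ D = (X ^ 2 + 1) * r ^ 2 := by
      by_cases hSc : (X ^ 2 + 1 : ℝ[X]) ∣ c
      · obtain ⟨c₀, hcc₀⟩ := hSc
        have hc₀ne : c₀ ≠ 0 := by rintro rfl; rw [mul_zero] at hcc₀; exact hcne hcc₀
        have hc₀deg : c₀.natDegree = 0 := by
          have hm := natDegree_mul hSne hc₀ne
          rw [← hcc₀, hSdeg] at hm
          omega
        have hSQ : (X ^ 2 + 1 : ℝ[X]) ∣ Q := by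
          apply hprime.dvd_of_dvd_pow (n := 2)
          refine ⟨c₀ ^ 2 * D, ?_⟩
          apply mul_left_cancel₀ hSne
          rw [hcc₀] at key2
          linear_combination key2
        obtain ⟨Q₁, hQQ₁⟩ := hSQ
        have hQ₁ne : Q₁ ≠ 0 := by rintro rfl; rw [mul_zero] at hQQ₁; exact hQ0 hQQ₁
        have key3 : (X ^ 2 + 1) * Q₁ ^ 2 = c₀ ^ 2 * D := by
          apply mul_left_cancel₀ hSne
          apply mul_left_cancel₀ hSne
          rw [hcc₀, hQQ₁] at key2
          linear_combination key2
        have hSc₀ : ¬ (X ^ 2 + 1 : ℝ[X]) ∣ c₀ := by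
          intro h
          have hle := natDegree_le_of_dvd h hc₀ne
          rw [hSdeg] at hle
          omega
        exact common c₀ Q₁ hc₀ne hQ₁ne hSc₀ key3
      · exact common c Q hcne hQ0 hSc key2
    obtain ⟨r, hrne, hDr⟩ := hex
    have hr1 : r.natDegree ≤ 1 := by
      have hm := natDegree_mul hSne (pow_ne_zero 2 hrne)
      rw [← hDr, hSdeg, natDegree_pow] at hm
      omega
    have ht : Real.sqrt (-2 * μ) ^ 2 = -2 * μ := Real.sq_sqrt (by linarith)
    have hid : d₁ ^ 2 + (X ^ 2 + 1) * r ^ 2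
        = C (-8 * μ) * (C ((ν - μ) / 2) * X ^ 2 + C (ν / 2)) ^ 2 := by
      rw [hDdef] at hDr
      linear_combination -hDr
    rw [rep2 d₁ hd₁, rep1 r hr1] at hid
    have hF : ∀ x : ℝ, (d₁.coeff 2 * x ^ 2 + d₁.coeff 1 * x + d₁.coeff 0) ^ 2
        + (x ^ 2 + 1) * (r.coeff 1 * x + r.coeff 0) ^ 2
        = (-8 * μ) * (((ν - μ) / 2) * x ^ 2 + ν / 2) ^ 2 := by
      intro x
      have hx := congrArg (eval x) hid
      simp only [eval_add, eval_mul, eval_pow, eval_C, eval_X, eval_one] at hx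
      linear_combination hx
    have hpq : r.coeff 1 ≠ 0 ∨ r.coeff 0 ≠ 0 := by
      by_contra h
      push_neg at h
      apply hrne
      rw [rep1 r hr1, h.1, h.2]
      simp
    obtain ⟨hνμ, hcase⟩ := endgame μ ν (d₁.coeff 2) (d₁.coeff 1) (d₁.coeff 0)
      (r.coeff 1) (r.coeff 0) (Real.sqrt (-2 * μ)) hμ hν ht hpq hF
    refine ⟨hνμ, ?_⟩
    rcases hcase with ⟨h1, h2, h3⟩ | ⟨h1, h2, h3⟩
    · left
      rw [rep2 d₁ hd₁, h1, h2, h3]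
      simp only [C_mul, C_0, map_neg]
      ring
    · right
      rw [rep2 d₁ hd₁, h1, h2, h3]
      simp only [C_mul, C_0, map_neg]
      ring
end

section
/- Let μ and ν be negative real numbers, set Λ := −8μ, and let a := ((ν−μ)/2)·X² + ν/2 in ℝ[X]. Then there exist no real numbers x₁, x₂, λ with x₁·x₂ > 0 such that x₁·(X−λ)² + x₂·(X²+1) = 2·√Λ·a holds in ℝ[X]. -/
open Polynomial

/-- there are no reals `x₁, x₂, λ` with `x₁x₂ > 0` such that
`x₁(X−λ)² + x₂(X²+1) = 2√Λ·a`, where `Λ = −8μ` and `a = ((ν−μ)/2)X² + ν/2`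
for negative reals `μ, ν`. -/
theorem stmt11 (μ ν : ℝ) (hμ : μ < 0) (hν : ν < 0)
    (Λ : ℝ) (hΛ : Λ = -8 * μ)
    (a : ℝ[X]) (ha : a = C ((ν - μ) / 2) * X ^ 2 + C (ν / 2)) :
    ¬ ∃ x₁ x₂ lam : ℝ, x₁ * x₂ > 0 ∧
      C x₁ * (X - C lam) ^ 2 + C x₂ * (X ^ 2 + 1) = C (2 * Real.sqrt Λ) * a := by
  rintro ⟨x₁, x₂, lam, hpos, heq⟩
  subst ha
  have hs : 0 < Real.sqrt Λ := Real.sqrt_pos.mpr (by nlinarith)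
  set s := Real.sqrt Λ with hsdef
  have e0 := congrArg (fun p => eval 0 p) heq
  have e1 := congrArg (fun p => eval 1 p) heq
  have e2 := congrArg (fun p => eval (-1) p) heq
  simp only [eval_add, eval_mul, eval_pow, eval_sub, eval_X, eval_C, eval_one] at e0 e1 e2
  have hlam : x₁ * lam = 0 := by nlinarith [e1, e2]
  have hx1 : x₁ ≠ 0 := fun h => by rw [h, zero_mul] at hpos; exact lt_irrefl 0 hpos
  have : lam = 0 := by
    rcases mul_eq_zero.mp hlam with h | h
    · exact absurd h hx1
    · exact h
  subst this
  -- e0 : x₂ = s * ν * ... ; e1 + e0 give x₁ + x₂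
  have hsν : s * ν < 0 := mul_neg_of_pos_of_neg hs hν
  have hsμ : s * μ < 0 := mul_neg_of_pos_of_neg hs hμ
  nlinarith [e0, e1, hsν, hsμ, hpos]
end

section
/- Let λ₂, λ₃ ∈ ℝ and let P, d₁, c, a ∈ ℝ[X] with natural degrees deg P ≤ 6, deg d₁ ≤ 3, deg c ≤ 2, deg a ≤ 2. If P² + (X²+1)·(d₁·c)² = −8·(X²+1)·(a·c)²·(λ₂·X² + λ₃), then the reflected polynomials P̃ := reflect₆(P), d̃₁ := reflect₃(d₁), c̃ := reflect₂(c), ã := reflect₂(a) — where reflectₙ(p) is the polynomial with the first n+1 coefficients of p reversed, i.e. reflectₙ(p)(X) = Xⁿ·p(1/X) for p of degree at most n — satisfy P̃² + (X²+1)·(d̃₁·c̃)² = −8·(X²+1)·(ã·c̃)²·(λ₃·X² + λ₂). -/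
open Polynomial

/-- the coefficient-reflection transformation interchanges `λ₂`
and `λ₃` in the polynomial constraint
`P² + (X²+1)(d₁c)² = −8(X²+1)(ac)²(λ₂X²+λ₃)`. -/
theorem stmt12 (lam₂ lam₃ : ℝ) (P d₁ c a : ℝ[X])
    (hP : P.natDegree ≤ 6) (hd₁ : d₁.natDegree ≤ 3)
    (hc : c.natDegree ≤ 2) (ha : a.natDegree ≤ 2)
    (heq : P ^ 2 + (X ^ 2 + 1) * (d₁ * c) ^ 2 =
      C (-8) * ((X ^ 2 + 1) * (a * c) ^ 2 * (C lam₂ * X ^ 2 + C lam₃))) :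
    (Polynomial.reflect 6 P) ^ 2 +
        (X ^ 2 + 1) * (Polynomial.reflect 3 d₁ * Polynomial.reflect 2 c) ^ 2 =
      C (-8) * ((X ^ 2 + 1) * (Polynomial.reflect 2 a * Polynomial.reflect 2 c) ^ 2 *
        (C lam₃ * X ^ 2 + C lam₂)) := by
  have hX2 : ((X : ℝ[X]) ^ 2 + 1).natDegree ≤ 2 := by
    compute_degree
  have hdc : (d₁ * c).natDegree ≤ 5 := (natDegree_mul_le).trans (by omega)
  have hac : (a * c).natDegree ≤ 4 := (natDegree_mul_le).trans (by omega)
  have hlam : (C lam₂ * X ^ 2 + C lam₃).natDegree ≤ 2 := by compute_degree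
  have key := congrArg (reflect 12) heq
  have e1 : reflect 12 (P ^ 2) = (reflect 6 P) ^ 2 := by
    rw [sq, sq, show (12 : ℕ) = 6 + 6 from rfl, reflect_mul P P hP hP]
  have eX : reflect 2 ((X : ℝ[X]) ^ 2 + 1) = X ^ 2 + 1 := by
    rw [reflect_add, reflect_one, reflect_monomial]
    simp [revAt_le]
    ring
  have e2 : reflect 12 ((X ^ 2 + 1) * (d₁ * c) ^ 2)
      = (X ^ 2 + 1) * (reflect 3 d₁ * reflect 2 c) ^ 2 := by
    rw [show (12 : ℕ) = 2 + 10 from rfl,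
      reflect_mul _ _ hX2 (natDegree_pow_le.trans (by omega)),
      eX, sq (d₁ * c), show (10 : ℕ) = 5 + 5 from rfl, reflect_mul _ _ hdc hdc,
      show (5 : ℕ) = 3 + 2 from rfl, reflect_mul _ _ hd₁ hc]
    ring
  have elam : reflect 2 (C lam₂ * X ^ 2 + C lam₃) = C lam₃ * X ^ 2 + C lam₂ := by
    rw [reflect_add, reflect_C_mul_X_pow, reflect_C]
    simp [revAt_le]
    ring
  have e3 : reflect 12 (C (-8) * ((X ^ 2 + 1) * (a * c) ^ 2 * (C lam₂ * X ^ 2 + C lam₃)))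
      = C (-8) * ((X ^ 2 + 1) * (reflect 2 a * reflect 2 c) ^ 2 * (C lam₃ * X ^ 2 + C lam₂)) := by
    rw [reflect_C_mul, show (12 : ℕ) = 10 + 2 from rfl,
      reflect_mul _ _ (natDegree_mul_le.trans (by
        have : ((a*c)^2).natDegree ≤ 8 := natDegree_pow_le.trans (by omega)
        omega) : ((X ^ 2 + 1) * (a * c) ^ 2).natDegree ≤ 10) hlam,
      elam, show (10 : ℕ) = 2 + 8 from rfl,
      reflect_mul _ _ hX2 (natDegree_pow_le.trans (by omega)),
      eX, sq (a * c), show (8 : ℕ) = 4 + 4 from rfl, reflect_mul _ _ hac hac,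
      show (4 : ℕ) = 2 + 2 from rfl, reflect_mul _ _ ha hc]
    ring
  rw [reflect_add, e1, e2, e3] at key
  exact key
end
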